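/- Let E ⊂ ℝ be closed, non-empty, |E| = 0, and Q₀ a cube (interval) intersecting E. Define for t ∈ (0,1) the connected-component analogues L̃_{Q₀}(t) = sup{L ≥ 0 : Σ_{I∈C_E(Q₀), |I|≥L}|I| ≥ t|Q₀|} and S̃_{Q₀}(t) = inf{L ≥ 0 : Σ_{I∈C_E(Q₀), |I|≤L}|I| ≥ t|Q₀|}, where C_E(Q₀) is the set of connected components of Q₀° \ E. Then for 0 < t' < t < 1: 𝓛_{Q₀}(t) ≤ L̃_{Q₀}(t) ≤ 4 𝓛_{Q₀}(t/4), and there is a constant C(t,t') > 0 with C(t,t') S̃_{Q₀}(t') ≤ 𝓢_{Q₀}(t) ≤ S̃_{Q₀}(t). -/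

import Mathlib

/-!
Every cube of `D_E(Q₀)` lies, up to the left endpoint of `Q₀`, in one component of `Q₀° \ E`, which
is at least as long as the cube. Conversely every component `I` contains a dyadic interval of
length at least `|I| / 4`, and the cube of `D_E(Q₀)` through that interval is at least as long.
Comparing the sums over the two families gives `𝓛(t) ≤ L̃(t) ≤ 4 𝓛(t / 4)` and `𝓢(t) ≤ S̃(t)`.

For the remaining bound, the dyadic parent of a cube `Q` of `D_E(Q₀)` meets `E`, so `Q` lies within
`2 |Q|` of an endpoint of its component. Outside the components of length `≤ ε`, the cubes of
length `≤ L` therefore cover at most `4 L` in each of the at most `|Q₀| / ε` remaining components,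
that is `sumLE L ≤ csumLE ε + 4 L |Q₀| / ε`. Taking `ε = 4 L / (t - t')` yields
`(t - t') / 4 · S̃(t') ≤ 𝓢(t)`.
-/

open MeasureTheory Set
open scoped Classical

/-- A half-open interval (one-dimensional cube) in `ℝ`. -/
structure Cube1 where
  a : ℝ
  l : ℝ
  l_pos : 0 < l

namespace Cube1
def carrier (Q : Cube1) : Set ℝ := Set.Ico Q.a (Q.a + Q.l)
def vol (Q : Cube1) : ℝ := Q.l
end Cube1

/-- `Q` is a dyadic subinterval of `Q₀` of generation `j`. -/
def IsDyadic (Q₀ Q : Cube1) (j : ℕ) : Prop :=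
  Q.l = Q₀.l / 2 ^ j ∧ ∃ k : ℕ, k < 2 ^ j ∧ Q.a = Q₀.a + (k : ℝ) * Q₀.l / 2 ^ j

def dyadicFamily (Q₀ : Cube1) : Set Cube1 := {Q | ∃ j, IsDyadic Q₀ Q j}

def IsParent (Q₀ P Q : Cube1) : Prop :=
  ∃ j : ℕ, IsDyadic Q₀ Q (j + 1) ∧ IsDyadic Q₀ P j ∧ Q.carrier ⊆ P.carrier

/-- The family `D_E(Q₀)` of maximal dyadic subintervals of `Q₀` avoiding `E` whose
dyadic parent meets `E`. -/
def DE (E : Set ℝ) (Q₀ : Cube1) : Set Cube1 :=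
  {Q | Q ∈ dyadicFamily Q₀ ∧ Q.carrier ∩ E = ∅ ∧
    ∀ P : Cube1, IsParent Q₀ P Q → (P.carrier ∩ E).Nonempty}

noncomputable def sumGE (E : Set ℝ) (Q₀ : Cube1) (L : ℝ) : ℝ :=
  ∑' Q : {Q : Cube1 // Q ∈ DE E Q₀ ∧ L ≤ Q.l}, (Q : Cube1).vol

noncomputable def sumLE (E : Set ℝ) (Q₀ : Cube1) (L : ℝ) : ℝ :=
  ∑' Q : {Q : Cube1 // Q ∈ DE E Q₀ ∧ Q.l ≤ L}, (Q : Cube1).vol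

def Lset (t : ℝ) (Q₀ : Cube1) (E : Set ℝ) : Set ℝ :=
  {L | 0 ≤ L ∧ t * Q₀.vol ≤ sumGE E Q₀ L}

def Sset (t : ℝ) (Q₀ : Cube1) (E : Set ℝ) : Set ℝ :=
  {L | 0 ≤ L ∧ t * Q₀.vol ≤ sumLE E Q₀ L}

noncomputable def Lfun (E : Set ℝ) (Q₀ : Cube1) (t : ℝ) : ℝ := sSup (Lset t Q₀ E)

noncomputable def Sfun (E : Set ℝ) (Q₀ : Cube1) (t : ℝ) : ℝ := sInf (Sset t Q₀ E)

/-- The connected components of `Q₀° \ E`. -/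
def comps (E : Set ℝ) (Q₀ : Cube1) : Set (Set ℝ) :=
  {I | ∃ x ∈ interior Q₀.carrier \ E, I = connectedComponentIn (interior Q₀.carrier \ E) x}

/-- The length of a measurable subset of `ℝ`. -/
noncomputable def len (I : Set ℝ) : ℝ := (volume I).toReal

noncomputable def csumGE (E : Set ℝ) (Q₀ : Cube1) (L : ℝ) : ℝ :=
  ∑' I : {I : Set ℝ // I ∈ comps E Q₀ ∧ L ≤ len I}, len (I : Set ℝ)

noncomputable def csumLE (E : Set ℝ) (Q₀ : Cube1) (L : ℝ) : ℝ :=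
  ∑' I : {I : Set ℝ // I ∈ comps E Q₀ ∧ len I ≤ L}, len (I : Set ℝ)

/-- `L̃_{Q₀}(t)`, the connected-component analogue of `𝓛_{Q₀}(t)`. -/
noncomputable def Ltil (E : Set ℝ) (Q₀ : Cube1) (t : ℝ) : ℝ :=
  sSup {L | 0 ≤ L ∧ t * Q₀.vol ≤ csumGE E Q₀ L}

/-- `S̃_{Q₀}(t)`, the connected-component analogue of `𝓢_{Q₀}(t)`. -/
noncomputable def Stil (E : Set ℝ) (Q₀ : Cube1) (t : ℝ) : ℝ :=
  sInf {L | 0 ≤ L ∧ t * Q₀.vol ≤ csumLE E Q₀ L}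

lemma len_mono {s t : Set ℝ} (h : s ⊆ t) (ht : volume t ≠ ⊤) : len s ≤ len t :=
  ENNReal.toReal_mono ht (measure_mono h)

lemma len_le_of_subset_insert {s t : Set ℝ} {a : ℝ} (h : s ⊆ insert a t)
    (ht : volume t ≠ ⊤) : len s ≤ len t := by
  have hat := measure_congr (μ := volume) (insert_ae_eq_self a t)
  exact (len_mono h (hat ▸ ht)).trans_eq (by rw [len, len, hat])

open Function in
lemma hasSum_len_iUnion {ι : Type*} [Countable ι] {s : ι → Set ℝ}
    (hm : ∀ i, MeasurableSet (s i)) (hd : Pairwise (Disjoint on s))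
    (hfin : volume (⋃ i, s i) ≠ ⊤) : HasSum (fun i => len (s i)) (len (⋃ i, s i)) := by
  rw [measure_iUnion hd hm] at hfin
  rw [len, measure_iUnion hd hm, ENNReal.tsum_toReal_eq (ENNReal.ne_top_of_tsum_ne_top hfin)]
  exact ENNReal.hasSum_toReal hfin

lemma IsOpen.eq_Ioo_csInf_csSup {s : Set ℝ} (ho : IsOpen s) (hc : IsConnected s)
    (hb : BddBelow s) (ha : BddAbove s) : s = Ioo (sInf s) (sSup s) := by
  refine subset_antisymm (fun x hx => ⟨?_, ?_⟩) (hc.Ioo_csInf_csSup_subset hb ha)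
  · obtain ⟨y, hyx, hy⟩ := (ho.eventually_mem hx).exists_lt
    exact (csInf_le hb hy).trans_lt hyx
  · obtain ⟨y, hyx, hy⟩ := (ho.eventually_mem hx).exists_gt
    exact hyx.trans_le (le_csSup ha hy)

namespace Cube1

variable {Q Q' : Cube1} {x y : ℝ}

lemma carrier_subset_iff : Q.carrier ⊆ Q'.carrier ↔ Q'.a ≤ Q.a ∧ Q.a + Q.l ≤ Q'.a + Q'.l :=
  Ico_subset_Ico_iff (lt_add_of_pos_right Q.a Q.l_pos)

lemma l_le_of_carrier_subset (h : Q.carrier ⊆ Q'.carrier) : Q.l ≤ Q'.l := by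
  linarith [carrier_subset_iff.1 h]

lemma eq_of_carrier_eq (h : Q.carrier = Q'.carrier) : Q = Q' := by
  obtain ⟨ha, hb⟩ := (Ico_eq_Ico_iff (Or.inl (lt_add_of_pos_right Q.a Q.l_pos))).1 h
  cases Q
  cases Q'
  simp only [mk.injEq]
  exact ⟨ha, by linarith⟩

lemma a_mem_carrier (Q : Cube1) : Q.a ∈ Q.carrier := ⟨le_rfl, lt_add_of_pos_right _ Q.l_pos⟩

lemma sub_lt_of_mem (hx : x ∈ Q.carrier) (hy : y ∈ Q.carrier) : y - x < Q.l := by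
  linarith [hx.1, hy.2]

lemma interior_carrier (Q : Cube1) : interior Q.carrier = Ioo Q.a (Q.a + Q.l) :=
  interior_Ico

lemma volume_carrier (Q : Cube1) : volume Q.carrier = ENNReal.ofReal Q.l := by
  rw [carrier, Real.volume_Ico, add_sub_cancel_left]

lemma len_carrier (Q : Cube1) : len Q.carrier = Q.l := by
  rw [len, Q.volume_carrier, ENNReal.toReal_ofReal Q.l_pos.le]

lemma volume_ne_top_of_subset (Q : Cube1) {s : Set ℝ} (h : s ⊆ Q.carrier) : volume s ≠ ⊤ :=
  ne_top_of_le_ne_top (by simp [Q.volume_carrier]) (measure_mono h)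

end Cube1

section Dyadic

variable {Q₀ Q C : Cube1} {i j : ℕ} {x y : ℝ}

noncomputable def dyadicIndex (Q₀ : Cube1) (j : ℕ) (x : ℝ) : ℤ := ⌊(x - Q₀.a) * 2 ^ j / Q₀.l⌋

lemma mem_carrier_iff_dyadicIndex_eq {k : ℕ} (hl : Q.l = Q₀.l / 2 ^ j)
    (ha : Q.a = Q₀.a + k * Q₀.l / 2 ^ j) : y ∈ Q.carrier ↔ dyadicIndex Q₀ j y = k := by
  have hc : 0 < Q₀.l / 2 ^ j := by have := Q₀.l_pos; positivity
  have hy : (y - Q₀.a) * 2 ^ j / Q₀.l = (y - Q₀.a) / (Q₀.l / 2 ^ j) := by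
    rw [div_div_eq_mul_div]
  rw [dyadicIndex, Int.floor_eq_iff, hy, le_div_iff₀ hc, div_lt_iff₀ hc, Cube1.carrier, mem_Ico,
    ha, hl, mul_div_assoc]
  push_cast
  constructor <;> rintro ⟨h₁, h₂⟩ <;> constructor <;> linarith

lemma IsDyadic.mem_carrier_iff (hQ : IsDyadic Q₀ Q j) (hx : x ∈ Q.carrier) :
    y ∈ Q.carrier ↔ dyadicIndex Q₀ j y = dyadicIndex Q₀ j x := by
  obtain ⟨hl, k, -, ha⟩ := hQ
  rw [mem_carrier_iff_dyadicIndex_eq hl ha, (mem_carrier_iff_dyadicIndex_eq hl ha).1 hx]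

lemma dyadicIndex_eq_ediv (hij : i ≤ j) (x : ℝ) :
    dyadicIndex Q₀ i x = dyadicIndex Q₀ j x / 2 ^ (j - i) := by
  have h2 : (2 : ℝ) ^ j = 2 ^ (j - i) * 2 ^ i := by rw [← pow_add, Nat.sub_add_cancel hij]
  have := Int.floor_div_natCast ((x - Q₀.a) * 2 ^ j / Q₀.l) (2 ^ (j - i))
  push_cast at this
  rw [dyadicIndex, dyadicIndex, ← this, h2]
  congr 1
  field_simp

lemma IsDyadic.carrier_subset_of_le (hC : IsDyadic Q₀ C i) (hQ : IsDyadic Q₀ Q j) (hij : i ≤ j)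
    (hxC : x ∈ C.carrier) (hxQ : x ∈ Q.carrier) : Q.carrier ⊆ C.carrier := fun y hy => by
  rw [hC.mem_carrier_iff hxC, dyadicIndex_eq_ediv hij, dyadicIndex_eq_ediv hij,
    (hQ.mem_carrier_iff hxQ).1 hy]

lemma IsDyadic.carrier_subset (hQ : IsDyadic Q₀ Q j) : Q.carrier ⊆ Q₀.carrier := by
  obtain ⟨hl, k, hk, ha⟩ := hQ
  have hc : 0 < Q₀.l / 2 ^ j := by have := Q₀.l_pos; positivity
  have hk' : (k : ℝ) + 1 ≤ 2 ^ j := by exact_mod_cast hk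
  have hQ₀ : Q₀.l = 2 ^ j * (Q₀.l / 2 ^ j) := by field_simp
  rw [Cube1.carrier_subset_iff, ha, hl, mul_div_assoc]
  constructor <;> nlinarith

lemma IsDyadic.gen_eq (hi : IsDyadic Q₀ Q i) (hj : IsDyadic Q₀ Q j) : i = j := by
  have h := hi.1.symm.trans hj.1
  rw [div_eq_div_iff (by positivity) (by positivity), mul_right_inj' Q₀.l_pos.ne'] at h
  exact (Nat.pow_right_injective le_rfl (by exact_mod_cast h)).symm

lemma IsDyadic.gen_ne_zero {E : Set ℝ} (hQ : IsDyadic Q₀ Q j) (hQE : Q.carrier ∩ E = ∅)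
    (hQ₀ : (Q₀.carrier ∩ E).Nonempty) : j ≠ 0 := by
  rintro rfl
  obtain ⟨hl, k, hk, ha⟩ := hQ
  obtain rfl : k = 0 := by simpa using hk
  have hcarrier : Q.carrier = Q₀.carrier := by simp [Cube1.carrier, ha, hl]
  exact hQ₀.ne_empty (hcarrier ▸ hQE)

lemma exists_isDyadic_mem (hx : x ∈ Q₀.carrier) (j : ℕ) :
    ∃ Q, IsDyadic Q₀ Q j ∧ x ∈ Q.carrier := by
  have hl := Q₀.l_pos
  set r := (x - Q₀.a) * 2 ^ j / Q₀.l
  have hr : 0 ≤ r := div_nonneg (mul_nonneg (by linarith [hx.1]) (by positivity)) hl.le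
  have hk : ⌊r⌋₊ < 2 ^ j := by
    refine (Nat.floor_lt hr).2 ?_
    rw [div_lt_iff₀ hl]
    push_cast
    nlinarith [hx.2, pow_pos (two_pos (α := ℝ)) j]
  let Q : Cube1 := ⟨Q₀.a + ⌊r⌋₊ * Q₀.l / 2 ^ j, Q₀.l / 2 ^ j, by positivity⟩
  refine ⟨Q, ⟨rfl, ⌊r⌋₊, hk, rfl⟩, (mem_carrier_iff_dyadicIndex_eq rfl rfl).2 ?_⟩
  exact (Int.natCast_floor_eq_floor hr).symm

lemma exists_isDyadic_subset_Ioo {α β : ℝ} (hα : Q₀.a ≤ α) (hαβ : α < β)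
    (hβ : β ≤ Q₀.a + Q₀.l) :
    ∃ C j, IsDyadic Q₀ C j ∧ C.carrier ⊆ Ioo α β ∧ β - α ≤ 4 * C.l := by
  have hl := Q₀.l_pos
  obtain ⟨n, hn₁, hn₂⟩ := exists_nat_pow_near (x := 2 * Q₀.l / (β - α)) (y := 2)
    (by rw [le_div_iff₀ (by linarith)]; linarith) one_lt_two
  rw [le_div_iff₀ (by linarith)] at hn₁
  rw [div_lt_iff₀ (by linarith)] at hn₂
  set c := Q₀.l / 2 ^ (n + 1) with hc
  have hc₀ : 0 < c := by positivity
  have hQ₀ : Q₀.l = 2 ^ (n + 1) * c := by rw [hc]; field_simp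
  rw [hQ₀, pow_succ] at hn₁ hn₂
  have h2n : (0 : ℝ) < 2 ^ n := by positivity
  have hcβ : 2 * c < β - α := by nlinarith
  have hβc : β - α ≤ 4 * c := by nlinarith
  obtain ⟨C, hC, hmem⟩ :=
    exists_isDyadic_mem (Q₀ := Q₀) (x := α + c) ⟨by linarith, by linarith⟩ (n + 1)
  have hCl : C.l = c := hC.1
  refine ⟨C, n + 1, hC, fun y hy => ⟨?_, ?_⟩, hCl ▸ hβc⟩
  · linarith [hy.1, hmem.2]
  · linarith [hy.2, hmem.1]

end Dyadic

section MaximalCubes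

variable {E : Set ℝ} {Q₀ Q C : Cube1} {i : ℕ} {x : ℝ}

/-- Otherwise `C` would contain the dyadic parent of `Q`, which meets `E`. -/
lemma IsDyadic.carrier_subset_of_mem_DE (hC : IsDyadic Q₀ C i) (hQ : Q ∈ DE E Q₀)
    (hCE : C.carrier ∩ E = ∅) (hxQ : x ∈ Q.carrier) (hxC : x ∈ C.carrier) :
    C.carrier ⊆ Q.carrier := by
  obtain ⟨⟨j, hj⟩, -, hparent⟩ := hQ
  rcases le_or_gt j i with hji | hij
  · exact hj.carrier_subset_of_le hC hji hxQ hxC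
  obtain ⟨m, rfl⟩ : ∃ m, j = m + 1 := ⟨j - 1, by omega⟩
  obtain ⟨P, hP, hxP⟩ := exists_isDyadic_mem (hj.carrier_subset hxQ) m
  have hQP := hP.carrier_subset_of_le hj m.le_succ hxP hxQ
  obtain ⟨w, hwP, hwE⟩ := hparent P ⟨m, hj, hP, hQP⟩
  exact (hCE.subset ⟨hC.carrier_subset_of_le hP (by omega) hxC hxP hwP, hwE⟩).elim

lemma carrier_subset_of_mem_DE (hQ : Q ∈ DE E Q₀) : Q.carrier ⊆ Q₀.carrier :=
  hQ.1.choose_spec.carrier_subset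

lemma pairwiseDisjoint_DE : (DE E Q₀).PairwiseDisjoint Cube1.carrier := by
  rintro Q hQ Q' hQ' hne
  refine disjoint_left.2 fun x hx hx' => hne (Cube1.eq_of_carrier_eq ?_)
  have ⟨⟨j, hj⟩, hQE, _⟩ := hQ
  have ⟨⟨j', hj'⟩, hQE', _⟩ := hQ'
  exact (hj.carrier_subset_of_mem_DE hQ' hQE hx' hx).antisymm
    (hj'.carrier_subset_of_mem_DE hQ hQE' hx hx')

lemma countable_DE : (DE E Q₀).Countable :=
  (pairwiseDisjoint_DE.mono fun Q => interior_subset).countable_of_isOpen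
    (fun _ _ => isOpen_interior) (fun Q _ => by simp [Cube1.interior_carrier, Q.l_pos])

lemma exists_mem_DE (hE : IsClosed E) (hx : x ∈ Q₀.carrier) (hxE : x ∉ E) :
    ∃ Q ∈ DE E Q₀, x ∈ Q.carrier := by
  have hex : ∃ j Q, IsDyadic Q₀ Q j ∧ x ∈ Q.carrier ∧ Q.carrier ∩ E = ∅ := by
    obtain ⟨ε, hε, hball⟩ := Metric.isOpen_iff.1 hE.isOpen_compl x hxE
    obtain ⟨j, hj⟩ := exists_pow_lt_of_lt_one (div_pos hε Q₀.l_pos) one_half_lt_one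
    obtain ⟨Q, hQ, hxQ⟩ := exists_isDyadic_mem hx j
    have hQl : Q.l < ε := by
      rw [div_pow, one_pow, lt_div_iff₀ Q₀.l_pos] at hj
      rwa [hQ.1, div_eq_inv_mul, ← one_div]
    refine ⟨j, Q, hQ, hxQ, eq_empty_iff_forall_notMem.2 fun y ⟨hyQ, hyE⟩ => hball ?_ hyE⟩
    rw [Metric.mem_ball, Real.dist_eq, abs_lt]
    constructor <;> linarith [Cube1.sub_lt_of_mem hxQ hyQ, Cube1.sub_lt_of_mem hyQ hxQ]
  classical
  obtain ⟨Q, hQ, hxQ, hQE⟩ := Nat.find_spec hex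
  refine ⟨Q, ⟨⟨_, hQ⟩, hQE, ?_⟩, hxQ⟩
  rintro P ⟨m, hQm, hP, hQP⟩
  rw [nonempty_iff_ne_empty]
  intro hPE
  have hm : m + 1 = Nat.find hex := hQm.gen_eq hQ
  exact Nat.find_min hex (by omega : m < Nat.find hex) ⟨P, hP, hQP hxQ, hPE⟩

lemma exists_parent_of_mem_DE (hQ₀ : (Q₀.carrier ∩ E).Nonempty) (hQ : Q ∈ DE E Q₀) :
    ∃ P : Cube1, Q.carrier ⊆ P.carrier ∧ P.l = 2 * Q.l ∧ (P.carrier ∩ E).Nonempty := by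
  obtain ⟨⟨j, hj⟩, hQE, hparent⟩ := hQ
  obtain ⟨m, rfl⟩ : ∃ m, j = m + 1 := ⟨j - 1, by have := hj.gen_ne_zero hQE hQ₀; omega⟩
  obtain ⟨P, hP, hQaP⟩ := exists_isDyadic_mem (hj.carrier_subset Q.a_mem_carrier) m
  have hQP := hP.carrier_subset_of_le hj m.le_succ hQaP Q.a_mem_carrier
  refine ⟨P, hQP, ?_, hparent P ⟨m, hj, hP, hQP⟩⟩
  rw [hP.1, hj.1, pow_succ]
  field_simp

lemma hasSum_vol_DE (p : Cube1 → Prop) :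
    HasSum (fun Q : {Q // Q ∈ DE E Q₀ ∧ p Q} => (Q : Cube1).vol)
      (len (⋃ Q : {Q // Q ∈ DE E Q₀ ∧ p Q}, (Q : Cube1).carrier)) := by
  have : Countable {Q // Q ∈ DE E Q₀ ∧ p Q} := (countable_DE.mono fun _ h => h.1).to_subtype
  convert hasSum_len_iUnion (s := fun Q : {Q // Q ∈ DE E Q₀ ∧ p Q} => (Q : Cube1).carrier)
    (fun _ => measurableSet_Ico)
    (fun Q Q' hne => pairwiseDisjoint_DE Q.2.1 Q'.2.1 (Subtype.coe_ne_coe.2 hne))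
    (Q₀.volume_ne_top_of_subset (iUnion_subset fun Q => carrier_subset_of_mem_DE Q.2.1)) using 1
  exact funext fun Q => (Cube1.len_carrier _).symm

end MaximalCubes

section Components

variable {E : Set ℝ} {Q₀ Q : Cube1} {I : Set ℝ} {x : ℝ}

lemma connectedComponentIn_eq_of_mem_comps (hI : I ∈ comps E Q₀) (hx : x ∈ I) :
    connectedComponentIn (interior Q₀.carrier \ E) x = I := by
  obtain ⟨y, -, rfl⟩ := hI
  exact (connectedComponentIn_eq hx).symm

lemma subset_of_mem_comps (hI : I ∈ comps E Q₀) : I ⊆ interior Q₀.carrier \ E := by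
  obtain ⟨y, -, rfl⟩ := hI
  exact connectedComponentIn_subset _ _

lemma subset_carrier_of_mem_comps (hI : I ∈ comps E Q₀) : I ⊆ Q₀.carrier :=
  fun _ hx => interior_subset (subset_of_mem_comps hI hx).1

lemma isOpen_of_mem_comps (hE : IsClosed E) (hI : I ∈ comps E Q₀) : IsOpen I := by
  obtain ⟨y, -, rfl⟩ := hI
  exact (isOpen_interior.sdiff hE).connectedComponentIn

lemma exists_eq_Ioo_of_mem_comps (hE : IsClosed E) (hI : I ∈ comps E Q₀) :
    ∃ α β, Q₀.a ≤ α ∧ α < β ∧ β ≤ Q₀.a + Q₀.l ∧ I = Ioo α β := by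
  have hIQ₀ : I ⊆ Ioo Q₀.a (Q₀.a + Q₀.l) :=
    Q₀.interior_carrier ▸ fun _ hx => (subset_of_mem_comps hI hx).1
  have hc : IsConnected I := by
    obtain ⟨y, hy, rfl⟩ := hI
    exact isConnected_connectedComponentIn_iff.2 hy
  have hIoo := (isOpen_of_mem_comps hE hI).eq_Ioo_csInf_csSup hc
    ⟨Q₀.a, fun _ hx => (hIQ₀ hx).1.le⟩ ⟨Q₀.a + Q₀.l, fun _ hx => (hIQ₀ hx).2.le⟩
  have hlt : sInf I < sSup I := nonempty_Ioo.1 (hIoo ▸ hc.nonempty)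
  obtain ⟨h₁, h₂⟩ := (Ioo_subset_Ioo_iff hlt).1 (hIoo ▸ hIQ₀)
  exact ⟨_, _, h₁, hlt, h₂, hIoo⟩

lemma len_le_of_mem_comps (hI : I ∈ comps E Q₀) : len I ≤ Q₀.l := by
  rw [← Q₀.len_carrier]
  exact len_mono (subset_carrier_of_mem_comps hI) (Q₀.volume_ne_top_of_subset subset_rfl)

lemma pairwiseDisjoint_comps : (comps E Q₀).PairwiseDisjoint id := by
  rintro I hI I' hI' hne
  exact disjoint_left.2 fun x hx hx' => hne
    ((connectedComponentIn_eq_of_mem_comps hI hx).symm.trans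
      (connectedComponentIn_eq_of_mem_comps hI' hx'))

lemma countable_comps (hE : IsClosed E) : (comps E Q₀).Countable :=
  pairwiseDisjoint_comps.countable_of_isOpen (fun _ hI => isOpen_of_mem_comps hE hI)
    (fun _ hI => by obtain ⟨y, hy, rfl⟩ := hI; exact ⟨y, mem_connectedComponentIn hy⟩)

lemma countable_subtype_comps (hE : IsClosed E) (p : Set ℝ → Prop) :
    Countable {I // I ∈ comps E Q₀ ∧ p I} :=
  ((countable_comps hE).mono fun _ h => h.1).to_subtype

lemma measurableSet_subtype_comps (hE : IsClosed E) {p : Set ℝ → Prop}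
    (I : {I // I ∈ comps E Q₀ ∧ p I}) : MeasurableSet (I : Set ℝ) :=
  (isOpen_of_mem_comps hE I.2.1).measurableSet

open Function in
lemma pairwise_disjoint_subtype_comps (p : Set ℝ → Prop) :
    Pairwise (Disjoint on fun I : {I // I ∈ comps E Q₀ ∧ p I} => (I : Set ℝ)) :=
  fun I I' hne => pairwiseDisjoint_comps I.2.1 I'.2.1 (Subtype.coe_ne_coe.2 hne)

lemma hasSum_len_comps (hE : IsClosed E) (p : Set ℝ → Prop) :
    HasSum (fun I : {I // I ∈ comps E Q₀ ∧ p I} => len (I : Set ℝ))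
      (len (⋃ I : {I // I ∈ comps E Q₀ ∧ p I}, (I : Set ℝ))) := by
  have := countable_subtype_comps (Q₀ := Q₀) hE p
  exact hasSum_len_iUnion (measurableSet_subtype_comps hE) (pairwise_disjoint_subtype_comps p)
    (Q₀.volume_ne_top_of_subset (iUnion_subset fun I => subset_carrier_of_mem_comps I.2.1))

def compOf (E : Set ℝ) (Q₀ Q : Cube1) : Set ℝ :=
  connectedComponentIn (interior Q₀.carrier \ E) (Q.a + Q.l / 2)

lemma carrier_inter_Ioi_subset_compOf (hQ : Q ∈ DE E Q₀) :
    Q.carrier ∩ Ioi Q₀.a ⊆ compOf E Q₀ Q := by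
  have hQQ₀ := Cube1.carrier_subset_iff.1 (carrier_subset_of_mem_DE hQ)
  have hsub : Q.carrier ∩ Ioi Q₀.a ⊆ interior Q₀.carrier \ E := by
    rintro y ⟨hyQ, hya⟩
    refine ⟨Q₀.interior_carrier ▸ ⟨hya, hyQ.2.trans_le hQQ₀.2⟩, fun hyE => ?_⟩
    exact hQ.2.1.subset ⟨hyQ, hyE⟩
  refine (ordConnected_Ico.inter ordConnected_Ioi).isPreconnected.subset_connectedComponentIn
    ⟨⟨?_, ?_⟩, mem_Ioi.2 ?_⟩ hsub <;> linarith [Q.l_pos]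

lemma compOf_mem_comps (hQ : Q ∈ DE E Q₀) : compOf E Q₀ Q ∈ comps E Q₀ := by
  have hmid : Q.a + Q.l / 2 ∈ Q.carrier ∩ Ioi Q₀.a := by
    have := (Cube1.carrier_subset_iff.1 (carrier_subset_of_mem_DE hQ)).1
    refine ⟨⟨?_, ?_⟩, mem_Ioi.2 ?_⟩ <;> linarith [Q.l_pos]
  exact ⟨_, connectedComponentIn_subset _ _ (carrier_inter_Ioi_subset_compOf hQ hmid), rfl⟩

lemma carrier_subset_insert_compOf (hQ : Q ∈ DE E Q₀) :
    Q.carrier ⊆ insert Q₀.a (compOf E Q₀ Q) := fun y hy => by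
  have hQa := (Cube1.carrier_subset_iff.1 (carrier_subset_of_mem_DE hQ)).1
  rcases hQa.trans hy.1 |>.eq_or_lt with h | h
  · exact Or.inl h.symm
  · exact Or.inr (carrier_inter_Ioi_subset_compOf hQ ⟨hy, h⟩)

lemma Ioo_subset_compOf (hQ : Q ∈ DE E Q₀) : Ioo Q.a (Q.a + Q.l) ⊆ compOf E Q₀ Q :=
  fun _ hy => carrier_inter_Ioi_subset_compOf hQ ⟨Ioo_subset_Ico_self hy,
    (Cube1.carrier_subset_iff.1 (carrier_subset_of_mem_DE hQ)).1.trans_lt hy.1⟩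

lemma l_le_len_compOf (hQ : Q ∈ DE E Q₀) : Q.l ≤ len (compOf E Q₀ Q) := by
  have h := len_mono (Ioo_subset_compOf hQ)
    (Q₀.volume_ne_top_of_subset (subset_carrier_of_mem_comps (compOf_mem_comps hQ)))
  rwa [len, Real.volume_Ioo, add_sub_cancel_left, ENNReal.toReal_ofReal Q.l_pos.le] at h

lemma compOf_eq (hQ : Q ∈ DE E Q₀) (hI : I ∈ comps E Q₀) (hxQ : x ∈ Q.carrier) (hxI : x ∈ I) :
    compOf E Q₀ Q = I := by
  have hxa : x ∈ Ioi Q₀.a := (Q₀.interior_carrier ▸ (subset_of_mem_comps hI hxI).1).1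
  have hx := carrier_inter_Ioi_subset_compOf hQ ⟨hxQ, hxa⟩
  exact (connectedComponentIn_eq_of_mem_comps (compOf_mem_comps hQ) hx).symm.trans
    (connectedComponentIn_eq_of_mem_comps hI hxI)

lemma exists_mem_DE_compOf_eq (hE : IsClosed E) (hI : I ∈ comps E Q₀) :
    ∃ Q ∈ DE E Q₀, compOf E Q₀ Q = I ∧ len I ≤ 4 * Q.l := by
  obtain ⟨α, β, hα, hαβ, hβ, rfl⟩ := exists_eq_Ioo_of_mem_comps hE hI
  obtain ⟨C, i, hC, hCI, hCl⟩ := exists_isDyadic_subset_Ioo hα hαβ hβ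
  obtain ⟨hCaQ₀, hCaE⟩ := subset_of_mem_comps hI (hCI C.a_mem_carrier)
  obtain ⟨Q, hQ, hCaQ⟩ := exists_mem_DE hE (interior_subset hCaQ₀) hCaE
  have hCE : C.carrier ∩ E = ∅ :=
    eq_empty_iff_forall_notMem.2 fun y hy => (subset_of_mem_comps hI (hCI hy.1)).2 hy.2
  have hCQ := Cube1.l_le_of_carrier_subset
    (hC.carrier_subset_of_mem_DE hQ hCE hCaQ C.a_mem_carrier)
  refine ⟨Q, hQ, compOf_eq hQ hI hCaQ (hCI C.a_mem_carrier), ?_⟩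
  rw [len, Real.volume_Ioo, ENNReal.toReal_ofReal (by linarith)]
  linarith

def collar (I : Set ℝ) (r : ℝ) : Set ℝ :=
  Icc (sInf I) (sInf I + r) ∪ Icc (sSup I - r) (sSup I)

lemma volume_collar_le (I : Set ℝ) {r : ℝ} (hr : 0 ≤ r) :
    volume (collar I r) ≤ ENNReal.ofReal (2 * r) := by
  refine (measure_union_le _ _).trans_eq ?_
  rw [Real.volume_Icc, Real.volume_Icc, add_sub_cancel_left, sub_sub_cancel, two_mul,
    ENNReal.ofReal_add hr hr]

/-- The dyadic parent of `Q`, of length `2 * Q.l`, meets `E`, hence the complement of the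
component. -/
lemma carrier_subset_collar (hE : IsClosed E) (hQ₀ : (Q₀.carrier ∩ E).Nonempty)
    (hQ : Q ∈ DE E Q₀) {r : ℝ} (hr : 2 * Q.l ≤ r) : Q.carrier ⊆ collar (compOf E Q₀ Q) r := by
  obtain ⟨α, β, -, hαβ, -, hI⟩ := exists_eq_Ioo_of_mem_comps hE (compOf_mem_comps hQ)
  have hQI := Ioo_subset_compOf hQ
  rw [hI, Ioo_subset_Ioo_iff (lt_add_of_pos_right _ Q.l_pos)] at hQI
  obtain ⟨P, hQP, hPl, w, hwP, hwE⟩ := exists_parent_of_mem_DE hQ₀ hQ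
  have hwI : w ∉ Ioo α β := fun hw =>
    (subset_of_mem_comps (compOf_mem_comps hQ) (hI ▸ hw)).2 hwE
  rw [hI, collar, csInf_Ioo hαβ, csSup_Ioo hαβ]
  intro y hy
  have h₁ := Cube1.sub_lt_of_mem hwP (hQP hy)
  have h₂ := Cube1.sub_lt_of_mem (hQP hy) hwP
  rcases le_or_gt w α with hw | hw
  · exact Or.inl ⟨by linarith [hy.1], by linarith⟩
  · have hβw : β ≤ w := not_lt.1 fun h => hwI ⟨hw, h⟩
    exact Or.inr ⟨by linarith, by linarith [hy.2]⟩

end Components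

section Comparison

variable {E : Set ℝ} {Q₀ : Cube1}

lemma tsum_vol_DE_eq (hE : IsClosed E) (hE0 : volume E = 0) {p : Cube1 → Prop}
    (hp : ∀ Q ∈ DE E Q₀, p Q) : ∑' Q : {Q // Q ∈ DE E Q₀ ∧ p Q}, (Q : Cube1).vol = Q₀.l := by
  rw [(hasSum_vol_DE p).tsum_eq, ← Q₀.len_carrier, len, len]
  congr 1
  refine le_antisymm (measure_mono (iUnion_subset fun Q => carrier_subset_of_mem_DE Q.2.1)) ?_
  rw [← measure_sdiff_null hE0]
  refine measure_mono fun x ⟨hx, hxE⟩ => ?_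
  obtain ⟨Q, hQ, hxQ⟩ := exists_mem_DE hE hx hxE
  exact mem_iUnion.2 ⟨⟨Q, hQ, hp Q hQ⟩, hxQ⟩

lemma tsum_len_comps_eq (hE : IsClosed E) (hE0 : volume E = 0) {p : Set ℝ → Prop}
    (hp : ∀ I ∈ comps E Q₀, p I) :
    ∑' I : {I // I ∈ comps E Q₀ ∧ p I}, len (I : Set ℝ) = Q₀.l := by
  have hU : (⋃ I : {I // I ∈ comps E Q₀ ∧ p I}, (I : Set ℝ)) = interior Q₀.carrier \ E := by
    refine subset_antisymm (iUnion_subset fun I => subset_of_mem_comps I.2.1) fun x hx => ?_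
    have hI : connectedComponentIn (interior Q₀.carrier \ E) x ∈ comps E Q₀ := ⟨x, hx, rfl⟩
    exact mem_iUnion.2 ⟨⟨_, hI, hp _ hI⟩, mem_connectedComponentIn hx⟩
  rw [(hasSum_len_comps hE p).tsum_eq, hU, len, measure_sdiff_null hE0, Q₀.interior_carrier,
    Real.volume_Ioo, add_sub_cancel_left, ENNReal.toReal_ofReal Q₀.l_pos.le]

lemma sumGE_le_csumGE (hE : IsClosed E) (L : ℝ) : sumGE E Q₀ L ≤ csumGE E Q₀ L := by
  rw [sumGE, csumGE, (hasSum_vol_DE fun Q => L ≤ Q.l).tsum_eq,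
    (hasSum_len_comps hE fun I => L ≤ len I).tsum_eq]
  refine len_le_of_subset_insert (a := Q₀.a) (iUnion_subset fun Q => ?_)
    (Q₀.volume_ne_top_of_subset (iUnion_subset fun I => subset_carrier_of_mem_comps I.2.1))
  have hQ := Q.2.1
  refine (carrier_subset_insert_compOf hQ).trans (insert_subset_insert ?_)
  exact subset_iUnion_of_subset ⟨_, compOf_mem_comps hQ, Q.2.2.trans (l_le_len_compOf hQ)⟩
    subset_rfl

lemma csumLE_le_sumLE (hE : IsClosed E) (L : ℝ) : csumLE E Q₀ L ≤ sumLE E Q₀ L := by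
  rw [sumLE, csumLE, (hasSum_vol_DE fun Q => Q.l ≤ L).tsum_eq,
    (hasSum_len_comps hE fun I => len I ≤ L).tsum_eq]
  refine len_mono (iUnion_subset fun I x hxI => ?_)
    (Q₀.volume_ne_top_of_subset (iUnion_subset fun Q => carrier_subset_of_mem_DE Q.2.1))
  obtain ⟨hxQ₀, hxE⟩ := subset_of_mem_comps I.2.1 hxI
  obtain ⟨Q, hQ, hxQ⟩ := exists_mem_DE hE (interior_subset hxQ₀) hxE
  have hQL : Q.l ≤ L := by
    have := l_le_len_compOf hQ
    rw [compOf_eq hQ I.2.1 hxQ hxI] at this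
    exact this.trans I.2.2
  exact mem_iUnion.2 ⟨⟨Q, hQ, hQL⟩, hxQ⟩

lemma csumGE_le_four_mul_sumGE (hE : IsClosed E) (L : ℝ) :
    csumGE E Q₀ L ≤ 4 * sumGE E Q₀ (L / 4) := by
  choose cube hcube hcomp hlen using
    fun I : {I // I ∈ comps E Q₀ ∧ L ≤ len I} => exists_mem_DE_compOf_eq hE I.2.1
  let e : {I // I ∈ comps E Q₀ ∧ L ≤ len I} → {Q // Q ∈ DE E Q₀ ∧ L / 4 ≤ Q.l} :=
    fun I => ⟨cube I, hcube I, by linarith [I.2.2, hlen I]⟩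
  have he : Function.Injective e := fun I I' h =>
    Subtype.ext ((hcomp I).symm.trans ((congrArg (compOf E Q₀ ·.1) h).trans (hcomp I')))
  rw [sumGE, ← tsum_mul_left]
  exact (hasSum_len_comps hE _).summable.tsum_le_tsum_of_inj e he
    (fun Q _ => by positivity [Q.1.l_pos]) (fun I => hlen I)
    ((hasSum_vol_DE _).summable.mul_left 4)

/-- There are at most `Q₀.l / ε` components of length greater than `ε`. -/
lemma tsum_volume_collar_le (hE : IsClosed E) {r ε : ℝ} (hr : 0 ≤ r) (hε : 0 < ε) :
    ∑' I : {I // I ∈ comps E Q₀ ∧ ε < len I}, volume (collar I r)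
      ≤ ENNReal.ofReal (2 * r / ε * Q₀.l) := by
  have := countable_subtype_comps (Q₀ := Q₀) hE (ε < len ·)
  have hrε : 0 ≤ 2 * r / ε := div_nonneg (by linarith) hε.le
  have hterm (I : {I // I ∈ comps E Q₀ ∧ ε < len I}) :
      volume (collar I r) ≤ ENNReal.ofReal (2 * r / ε) * volume (I : Set ℝ) := by
    have hfin := Q₀.volume_ne_top_of_subset (subset_carrier_of_mem_comps I.2.1)
    rw [← ENNReal.ofReal_toReal hfin, ← ENNReal.ofReal_mul hrε]
    refine (volume_collar_le _ hr).trans (ENNReal.ofReal_le_ofReal ?_)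
    calc 2 * r = 2 * r / ε * ε := by field_simp
      _ ≤ 2 * r / ε * len I := by gcongr; exact I.2.2.le
  calc _ ≤ ∑' I : {I // I ∈ comps E Q₀ ∧ ε < len I},
          ENNReal.ofReal (2 * r / ε) * volume (I : Set ℝ) := ENNReal.tsum_le_tsum hterm
    _ = ENNReal.ofReal (2 * r / ε) *
          volume (⋃ I : {I // I ∈ comps E Q₀ ∧ ε < len I}, (I : Set ℝ)) := by
        rw [ENNReal.tsum_mul_left, measure_iUnion (pairwise_disjoint_subtype_comps _)
          (measurableSet_subtype_comps hE)]
    _ ≤ ENNReal.ofReal (2 * r / ε) * volume Q₀.carrier := by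
        gcongr
        exact iUnion_subset fun I => subset_carrier_of_mem_comps I.2.1
    _ = ENNReal.ofReal (2 * r / ε * Q₀.l) := by rw [Q₀.volume_carrier, ENNReal.ofReal_mul hrε]

/-- Small cubes of `D_E(Q₀)` lie either in small components or in collars of large ones. -/
lemma sumLE_le_csumLE_add (hE : IsClosed E) (hQ₀ : (Q₀.carrier ∩ E).Nonempty) {L ε : ℝ}
    (hL : 0 ≤ L) (hε : 0 < ε) : sumLE E Q₀ L ≤ csumLE E Q₀ ε + 4 * L / ε * Q₀.l := by
  set small := ⋃ I : {I // I ∈ comps E Q₀ ∧ len I ≤ ε}, (I : Set ℝ)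
  set collars := ⋃ I : {I // I ∈ comps E Q₀ ∧ ε < len I}, collar I (2 * L)
  have := countable_subtype_comps (Q₀ := Q₀) hE (ε < len ·)
  have hcover : (⋃ Q : {Q // Q ∈ DE E Q₀ ∧ Q.l ≤ L}, (Q : Cube1).carrier)
      ⊆ insert Q₀.a (small ∪ collars) := by
    refine iUnion_subset fun Q => ?_
    have hQ := Q.2.1
    rcases le_or_gt (len (compOf E Q₀ Q)) ε with hsmall | hbig
    · refine (carrier_subset_insert_compOf hQ).trans (insert_subset_insert ?_)
      exact subset_union_of_subset_left (subset_iUnion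
        (fun I : {I // I ∈ comps E Q₀ ∧ len I ≤ ε} => (I : Set ℝ))
        ⟨_, compOf_mem_comps hQ, hsmall⟩) _
    · refine (subset_insert _ _).trans (insert_subset_insert ?_)
      refine subset_union_of_subset_right ?_ _
      exact subset_iUnion_of_subset (ι := {I // I ∈ comps E Q₀ ∧ ε < len I})
        ⟨_, compOf_mem_comps hQ, hbig⟩ (carrier_subset_collar hE hQ₀ hQ (by linarith [Q.2.2]))
  have hsmall_fin : volume small ≠ ⊤ :=
    Q₀.volume_ne_top_of_subset (iUnion_subset fun I => subset_carrier_of_mem_comps I.2.1)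
  have hvol : volume (⋃ Q : {Q // Q ∈ DE E Q₀ ∧ Q.l ≤ L}, (Q : Cube1).carrier)
      ≤ volume small + ENNReal.ofReal (4 * L / ε * Q₀.l) := by
    calc _ ≤ volume (insert Q₀.a (small ∪ collars)) := measure_mono hcover
      _ = volume (small ∪ collars) := measure_congr (insert_ae_eq_self _ _)
      _ ≤ volume small + ∑' I : {I // I ∈ comps E Q₀ ∧ ε < len I}, volume (collar I (2 * L)) :=
          (measure_union_le _ _).trans (add_le_add le_rfl (measure_iUnion_le _))
      _ ≤ volume small + ENNReal.ofReal (4 * L / ε * Q₀.l) := by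
          refine add_le_add le_rfl ((tsum_volume_collar_le hE (by linarith) hε).trans_eq ?_)
          ring_nf
  rw [sumLE, csumLE, (hasSum_vol_DE fun Q => Q.l ≤ L).tsum_eq,
    (hasSum_len_comps hE fun I => len I ≤ ε).tsum_eq, len, len]
  calc _ ≤ (volume small + ENNReal.ofReal (4 * L / ε * Q₀.l)).toReal :=
        ENNReal.toReal_mono (ENNReal.add_ne_top.2 ⟨hsmall_fin, ENNReal.ofReal_ne_top⟩) hvol
    _ = _ := by
        rw [ENNReal.toReal_add hsmall_fin ENNReal.ofReal_ne_top,
          ENNReal.toReal_ofReal (mul_nonneg (div_nonneg (by linarith) hε.le) Q₀.l_pos.le)]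

end Comparison

section Functions

variable {E : Set ℝ} {Q₀ : Cube1} {t t' L : ℝ}

lemma sumGE_eq_zero_of_lt (hL : Q₀.l < L) : sumGE E Q₀ L = 0 := by
  have : IsEmpty {Q // Q ∈ DE E Q₀ ∧ L ≤ Q.l} := ⟨fun Q => hL.not_ge
    (Q.2.2.trans (Cube1.l_le_of_carrier_subset (carrier_subset_of_mem_DE Q.2.1)))⟩
  exact tsum_empty

lemma csumGE_eq_zero_of_lt (hL : Q₀.l < L) : csumGE E Q₀ L = 0 := by
  have : IsEmpty {I // I ∈ comps E Q₀ ∧ L ≤ len I} :=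
    ⟨fun I => hL.not_ge (I.2.2.trans (len_le_of_mem_comps I.2.1))⟩
  exact tsum_empty

lemma sumLE_eq_zero_of_nonpos (hL : L ≤ 0) : sumLE E Q₀ L = 0 := by
  have : IsEmpty {Q // Q ∈ DE E Q₀ ∧ Q.l ≤ L} := ⟨fun Q => Q.1.l_pos.not_ge (Q.2.2.trans hL)⟩
  exact tsum_empty

lemma sumLE_self (hE : IsClosed E) (hE0 : volume E = 0) : sumLE E Q₀ Q₀.l = Q₀.l :=
  tsum_vol_DE_eq hE hE0 fun _ hQ => Cube1.l_le_of_carrier_subset (carrier_subset_of_mem_DE hQ)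

lemma csumLE_self (hE : IsClosed E) (hE0 : volume E = 0) : csumLE E Q₀ Q₀.l = Q₀.l :=
  tsum_len_comps_eq hE hE0 fun _ hI => len_le_of_mem_comps hI

lemma bddAbove_Lset (ht : 0 < t) : BddAbove (Lset t Q₀ E) := by
  refine ⟨Q₀.l, fun L ⟨_, hL⟩ => not_lt.1 fun hlt => ?_⟩
  rw [sumGE_eq_zero_of_lt hlt] at hL
  exact hL.not_gt (mul_pos ht Q₀.l_pos)

lemma bddAbove_Ltil_set (ht : 0 < t) :
    BddAbove {L | 0 ≤ L ∧ t * Q₀.vol ≤ csumGE E Q₀ L} := by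
  refine ⟨Q₀.l, fun L ⟨_, hL⟩ => not_lt.1 fun hlt => ?_⟩
  rw [csumGE_eq_zero_of_lt hlt] at hL
  exact hL.not_gt (mul_pos ht Q₀.l_pos)

lemma Lfun_le_Ltil (hE : IsClosed E) (ht : 0 < t) : Lfun E Q₀ t ≤ Ltil E Q₀ t := by
  rcases (Lset t Q₀ E).eq_empty_or_nonempty with h | h
  · rw [Lfun, h, Real.sSup_empty]
    exact Real.sSup_nonneg fun L hL => hL.1
  · exact csSup_le_csSup (bddAbove_Ltil_set ht) h
      fun L hL => ⟨hL.1, hL.2.trans (sumGE_le_csumGE hE L)⟩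

lemma Ltil_le_four_mul_Lfun (hE : IsClosed E) (ht : 0 < t) :
    Ltil E Q₀ t ≤ 4 * Lfun E Q₀ (t / 4) := by
  have hLfun : 0 ≤ Lfun E Q₀ (t / 4) := Real.sSup_nonneg fun L hL => hL.1
  refine Real.sSup_le (fun L ⟨hL₀, hL⟩ => ?_) (by positivity)
  have hmem : L / 4 ∈ Lset (t / 4) Q₀ E := by
    refine ⟨by positivity, ?_⟩
    have := csumGE_le_four_mul_sumGE (Q₀ := Q₀) hE L
    unfold Cube1.vol at *
    linarith
  have : L / 4 ≤ Lfun E Q₀ (t / 4) := le_csSup (bddAbove_Lset (by positivity)) hmem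
  linarith

lemma Sfun_le_Stil (hE : IsClosed E) (hE0 : volume E = 0) (ht : t ≤ 1) :
    Sfun E Q₀ t ≤ Stil E Q₀ t := by
  have hl : Q₀.l ∈ {L | 0 ≤ L ∧ t * Q₀.vol ≤ csumLE E Q₀ L} :=
    ⟨Q₀.l_pos.le, by rw [csumLE_self hE hE0, Cube1.vol]; nlinarith [Q₀.l_pos]⟩
  exact csInf_le_csInf ⟨0, fun L hL => hL.1⟩ ⟨_, hl⟩
    fun L hL => ⟨hL.1, hL.2.trans (csumLE_le_sumLE hE L)⟩

lemma mul_Stil_le_Sfun (hE : IsClosed E) (hQ₀ : (Q₀.carrier ∩ E).Nonempty)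
    (hE0 : volume E = 0) (ht₀ : 0 < t) (ht't : t' < t) (ht : t ≤ 1) :
    (t - t') / 4 * Stil E Q₀ t' ≤ Sfun E Q₀ t := by
  have hl : Q₀.l ∈ Sset t Q₀ E :=
    ⟨Q₀.l_pos.le, by rw [sumLE_self hE hE0, Cube1.vol]; nlinarith [Q₀.l_pos]⟩
  refine le_csInf ⟨_, hl⟩ fun L ⟨hL₀, hL⟩ => ?_
  have hLpos : 0 < L := not_le.1 fun hL0 => by
    rw [sumLE_eq_zero_of_nonpos hL0] at hL
    exact hL.not_gt (mul_pos ht₀ Q₀.l_pos)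
  have htt' : 0 < t - t' := sub_pos.2 ht't
  set ε := 4 * L / (t - t') with hε_def
  have hε : 0 < ε := by positivity
  have hmem : ε ∈ {L | 0 ≤ L ∧ t' * Q₀.vol ≤ csumLE E Q₀ L} := by
    refine ⟨hε.le, ?_⟩
    have hsplit := sumLE_le_csumLE_add hE hQ₀ hL₀ hε
    rw [show 4 * L / ε = t - t' by rw [hε_def]; field_simp] at hsplit
    unfold Cube1.vol at *
    linarith
  calc (t - t') / 4 * Stil E Q₀ t' ≤ (t - t') / 4 * ε := by
        gcongr
        exact csInf_le ⟨0, fun L hL => hL.1⟩ hmem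
    _ = L := by rw [hε_def]; field_simp

end Functions

theorem stmt18_general (E : Set ℝ) (hE : IsClosed E)
    (hE0 : volume E = 0) (Q₀ : Cube1) (hQ₀ : (Q₀.carrier ∩ E).Nonempty)
    (t t' : ℝ) (ht' : 0 < t') (ht't : t' < t) (ht : t < 1) :
    Lfun E Q₀ t ≤ Ltil E Q₀ t ∧ Ltil E Q₀ t ≤ 4 * Lfun E Q₀ (t / 4) ∧
    (∃ C : ℝ, 0 < C ∧ C * Stil E Q₀ t' ≤ Sfun E Q₀ t) ∧
    Sfun E Q₀ t ≤ Stil E Q₀ t := by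
  have ht₀ : 0 < t := ht'.trans ht't
  exact ⟨Lfun_le_Ltil hE ht₀, Ltil_le_four_mul_Lfun hE ht₀,
    ⟨(t - t') / 4, by linarith, mul_Stil_le_Sfun hE hQ₀ hE0 ht₀ ht't ht.le⟩,
    Sfun_le_Stil hE hE0 ht.le⟩

/-- Comparison between the dyadic quantities `𝓛_{Q₀}, 𝓢_{Q₀}` and their
connected-component analogues `L̃_{Q₀}, S̃_{Q₀}` in `ℝ`. -/
theorem stmt18 (E : Set ℝ) (hE : IsClosed E) (hne : E.Nonempty)
    (hE0 : volume E = 0) (Q₀ : Cube1) (hQ₀ : (Q₀.carrier ∩ E).Nonempty)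
    (t t' : ℝ) (ht' : 0 < t') (ht't : t' < t) (ht : t < 1) :
    Lfun E Q₀ t ≤ Ltil E Q₀ t ∧ Ltil E Q₀ t ≤ 4 * Lfun E Q₀ (t / 4) ∧
    (∃ C : ℝ, 0 < C ∧ C * Stil E Q₀ t' ≤ Sfun E Q₀ t) ∧
    Sfun E Q₀ t ≤ Stil E Q₀ t :=
  stmt18_general E hE hE0 Q₀ hQ₀ t t' ht' ht't ht
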